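/- arXiv:1009.4517 — 3 statements merged into one kernel-verified Lean document; each statement's English description precedes it below -/
import Mathlib

section
/- A finite graph G has an st-ordering (an ordering v_1, ..., v_n of its vertices such that v_1 is adjacent to v_n, and every intermediate vertex v_i with 1 < i < n has a neighbor v_j with j < i and a neighbor v_k with k > i) if and only if G is 2-connected. -/
/-- An st-ordering of a graph `G` via a bijection `v : Fin n ≃ V`:
the first vertex is adjacent to the last, and every intermediate vertex
has a neighbor with smaller index and a neighbor with larger index. -/
def IsStOrdering {n : ℕ} {V : Type*} (G : SimpleGraph V) (v : Fin n ≃ V) : Prop :=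
  (∃ i j : Fin n, i.val = 0 ∧ j.val = n - 1 ∧ G.Adj (v i) (v j)) ∧
  ∀ i : Fin n, 0 < i.val → i.val < n - 1 →
    (∃ j : Fin n, j < i ∧ G.Adj (v i) (v j)) ∧ (∃ k : Fin n, i < k ∧ G.Adj (v i) (v k))

/-- `G` is 2-connected: at least 3 vertices, connected, and removal of
any single vertex leaves a connected graph. -/
def TwoConnected {V : Type*} [Fintype V] (G : SimpleGraph V) : Prop :=
  3 ≤ Fintype.card V ∧ G.Connected ∧ ∀ x : V, (G.induce {y | y ≠ x}).Connected

open List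

section Aux

variable {V : Type*} {G : SimpleGraph V}

/-- A partial st-ordering: a nodup list whose first and last elements are adjacent,
and every element has a neighbor before it (unless first) and after it (unless last). -/
def Good (G : SimpleGraph V) (L : List V) : Prop :=
  L.Nodup ∧ 2 ≤ L.length ∧
  (∃ s t, L.head? = some s ∧ L.getLast? = some t ∧ G.Adj s t) ∧
  ∀ l1 a l2, L = l1 ++ a :: l2 →
    (l1 ≠ [] → ∃ b ∈ l1, G.Adj a b) ∧ (l2 ≠ [] → ∃ b ∈ l2, G.Adj a b)

lemma split_unique {α : Type*} {a : α} : ∀ (l1 : List α) {u1 l2 u2 : List α},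
    (l1 ++ a :: l2).Nodup → l1 ++ a :: l2 = u1 ++ a :: u2 → l1 = u1 ∧ l2 = u2 := by
  intro l1
  induction l1 with
  | nil =>
    intro u1 l2 u2 hnd heq
    cases u1 with
    | nil =>
      simp only [nil_append, cons.injEq] at heq
      exact ⟨rfl, heq.2⟩
    | cons h t =>
      simp only [nil_append, cons_append, cons.injEq] at heq
      obtain ⟨rfl, rfl⟩ := heq
      simp only [nil_append, nodup_cons] at hnd
      exact absurd (by simp : a ∈ t ++ a :: u2) hnd.1
  | cons h t ih =>
    intro u1 l2 u2 hnd heq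
    cases u1 with
    | nil =>
      simp only [cons_append, nil_append, cons.injEq] at heq
      obtain ⟨rfl, rfl⟩ := heq
      simp only [cons_append, nodup_cons] at hnd
      exact absurd (by simp : h ∈ t ++ h :: l2) hnd.1
    | cons h' t' =>
      simp only [cons_append, cons.injEq] at heq
      obtain ⟨rfl, heq⟩ := heq
      simp only [cons_append, nodup_cons] at hnd
      obtain ⟨h1, h2⟩ := ih hnd.2 heq
      exact ⟨by rw [h1], h2⟩

lemma mem_split_pair {α : Type*} {x z : α} : ∀ {L : List α}, x ∈ L → z ∈ L → x ≠ z →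
    (∃ l1 l2, L = l1 ++ x :: l2 ∧ z ∈ l2) ∨ (∃ l1 l2, L = l1 ++ z :: l2 ∧ x ∈ l2) := by
  intro L
  induction L with
  | nil => simp
  | cons h t ih =>
    intro hx hz hne
    rcases eq_or_ne h x with rfl | hhx
    · left
      refine ⟨[], t, by simp, ?_⟩
      rcases mem_cons.mp hz with rfl | hzt
      · exact absurd rfl hne
      · exact hzt
    · rcases eq_or_ne h z with rfl | hhz
      · right
        refine ⟨[], t, by simp, ?_⟩
        rcases mem_cons.mp hx with rfl | hxt
        · exact absurd rfl (Ne.symm hhx)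
        · exact hxt
      · have hx' : x ∈ t := by
          rcases mem_cons.mp hx with rfl | h'
          · exact absurd rfl hhx
          · exact h'
        have hz' : z ∈ t := by
          rcases mem_cons.mp hz with rfl | h'
          · exact absurd rfl hhz
          · exact h'
        rcases ih hx' hz' hne with ⟨l1, l2, rfl, hm⟩ | ⟨l1, l2, rfl, hm⟩
        · exact Or.inl ⟨h :: l1, l2, rfl, hm⟩
        · exact Or.inr ⟨h :: l1, l2, rfl, hm⟩

lemma split_eq {α : Type*} {a : α} {M u1 u2 l1 l2 : List α} (hnd : M.Nodup)
    (h1 : M = l1 ++ a :: l2) (h2 : M = u1 ++ a :: u2) : u1 = l1 ∧ u2 = l2 := by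
  subst h1
  obtain ⟨e1, e2⟩ := split_unique l1 hnd h2
  exact ⟨e1.symm, e2.symm⟩

lemma good_insert {G : SimpleGraph V} {L l1 l2 c : List V} {x z : V}
    (hL : Good G L) (hdec : L = l1 ++ x :: l2) (hz : z ∈ l2) (hc : c ≠ [])
    (hcn : c.Nodup) (hdisj : ∀ v ∈ c, v ∉ L)
    (hchain : List.Chain' G.Adj (x :: (c ++ [z]))) :
    Good G (l1 ++ x :: (c ++ l2)) := by
  obtain ⟨hnd, hlen, hht, hmid⟩ := hL
  subst hdec
  have hndM : (l1 ++ x :: (c ++ l2)).Nodup := by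
    simp only [nodup_append, nodup_cons, mem_append, mem_cons, disjoint_cons_right,
      disjoint_append_right] at hnd ⊢
    obtain ⟨h1, ⟨hxl2, h2⟩, hd⟩ := hnd
    refine ⟨h1, ⟨?_, hcn, h2, fun a ha b hb hab => hdisj a ha (by simp [hab, hb])⟩, ?_⟩
    · rintro (hxc | hxl2')
      · exact hdisj x hxc (by simp)
      · exact hxl2 hxl2'
    · rintro a ha b (rfl | hbc | hbl2)
      · exact hd a ha _ (Or.inl rfl)
      · exact fun hab => hdisj b hbc (by simp [← hab, ha])
      · exact hd a ha b (Or.inr hbl2)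
  have hl2ne : l2 ≠ [] := ne_nil_of_mem hz
  refine ⟨hndM, ?_, ?_, ?_⟩
  · calc 2 ≤ (l1 ++ x :: l2).length := hlen
      _ ≤ (l1 ++ x :: (c ++ l2)).length := by simp
  · obtain ⟨s, t, hs, ht, hadj⟩ := hht
    refine ⟨s, t, ?_, ?_, hadj⟩
    · rw [head?_append] at hs ⊢
      cases l1 <;> simpa using hs
    · rw [getLast?_append] at ht ⊢
      rw [show (x :: (c ++ l2)).getLast? = (x :: l2).getLast? from ?_]
      · exact ht
      · rw [show x :: (c ++ l2) = (x :: c) ++ l2 from by simp,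
          show (x :: l2) = [x] ++ l2 from by simp, getLast?_append, getLast?_append]
        cases l2 <;> simp_all
  · intro u1 a u2 heq
    -- determine where a is
    have haMem : a ∈ l1 ++ x :: (c ++ l2) := by rw [heq]; simp
    simp only [mem_append, mem_cons] at haMem
    rcases haMem with ha1 | rfl | hac | ha2
    · -- a ∈ l1
      obtain ⟨p, q, rfl⟩ := List.append_of_mem ha1
      have hcan : (p ++ a :: q) ++ x :: (c ++ l2) = p ++ a :: (q ++ x :: (c ++ l2)) := by simp
      obtain ⟨rfl, rfl⟩ := split_eq hndM hcan heq
      have hold := hmid u1 a (q ++ x :: l2) (by simp)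
      constructor
      · exact hold.1
      · intro _
        obtain ⟨b, hb, hadj⟩ := hold.2 (by simp)
        refine ⟨b, ?_, hadj⟩
        simp only [mem_append, mem_cons] at hb ⊢
        tauto
    · -- a = x
      obtain ⟨rfl, rfl⟩ := split_eq hndM rfl heq
      have hold := hmid u1 a l2 rfl
      refine ⟨hold.1, fun _ => ?_⟩
      obtain ⟨y, hy⟩ := exists_cons_of_ne_nil hc
      obtain ⟨cc, rfl⟩ := hy
      refine ⟨y, by simp, ?_⟩
      exact (isChain_cons_cons.mp (hchain : IsChain G.Adj (a :: y :: (cc ++ [z])))).1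
    · -- a ∈ c
      obtain ⟨p, q, rfl⟩ := List.append_of_mem hac
      have hcan : l1 ++ x :: ((p ++ a :: q) ++ l2) = (l1 ++ x :: p) ++ a :: (q ++ l2) := by simp
      obtain ⟨rfl, rfl⟩ := split_eq hndM hcan heq
      constructor
      · intro _
        have hch : Chain' G.Adj ((x :: p) ++ (a :: (q ++ [z]))) := by
          simpa using hchain
        obtain ⟨-, -, hlink⟩ := isChain_append.mp hch
        have hne' : (x :: p) ≠ [] := by simp
        have hb : (x :: p).getLast? = some ((x :: p).getLast hne') :=
          getLast?_eq_getLast hne'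
        have hadj := hlink _ hb a rfl
        exact ⟨(x :: p).getLast hne', mem_append_right _ (getLast_mem hne'), hadj.symm⟩
      · intro _
        have hch : Chain' G.Adj (((x :: p) ++ [a]) ++ (q ++ [z])) := by
          simpa using hchain
        obtain ⟨-, -, hlink⟩ := isChain_append.mp hch
        have hg : ((x :: p) ++ [a]).getLast? = some a := by
          rw [getLast?_append]; rfl
        cases q with
        | nil =>
          exact ⟨z, by simpa using hz, hlink a hg z (by simp)⟩
        | cons w q' =>
          exact ⟨w, by simp, hlink a hg w (by simp)⟩
    · -- a ∈ l2
      obtain ⟨p, q, rfl⟩ := List.append_of_mem ha2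
      have hcan : l1 ++ x :: (c ++ (p ++ a :: q)) = (l1 ++ x :: (c ++ p)) ++ a :: q := by simp
      obtain ⟨rfl, rfl⟩ := split_eq hndM hcan heq
      have hold := hmid (l1 ++ x :: p) a u2 (by simp)
      constructor
      · intro _
        obtain ⟨b, hb, hadj⟩ := hold.1 (by simp)
        refine ⟨b, ?_, hadj⟩
        simp only [mem_append, mem_cons] at hb ⊢
        tauto
      · exact fun h => hold.2 h

lemma crossing {L : List V} :
    ∀ {u w : V} (_ : G.Walk u w), u ∉ L → w ∈ L → ∃ x ∈ L, ∃ y, y ∉ L ∧ G.Adj y x := by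
  intro u w p
  induction p with
  | nil => intro hu hw; exact absurd hw hu
  | @cons a b c h p ih =>
    intro hu hw
    by_cases hb : b ∈ L
    · exact ⟨b, hb, a, hu, h⟩
    · exact ih hb hw

lemma walk_avoiding {x : V} (hx : (G.induce {y | y ≠ x}).Connected)
    {a b : V} (ha : a ≠ x) (hb : b ≠ x) :
    ∃ w : G.Walk a b, x ∉ w.support := by
  obtain ⟨p⟩ := hx.preconnected ⟨a, ha⟩ ⟨b, hb⟩
  let f := SimpleGraph.Embedding.induce (G := G) {y | y ≠ x}
  refine ⟨p.map f.toHom, ?_⟩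
  erw [SimpleGraph.Walk.support_map]
  simp only [List.mem_map]
  rintro ⟨⟨v, hv⟩, -, hvx⟩
  exact hv hvx

lemma ear_extract {L : List V} {x : V} :
    ∀ {y t : V} (p : G.Walk y t), p.support.Nodup → x ∉ p.support → y ∉ L → t ∈ L →
    ∃ (c : List V) (z : V), c ≠ [] ∧ c.Nodup ∧ (∀ v ∈ c, v ∉ L) ∧ z ∈ L ∧ z ≠ x ∧
      c.head? = some y ∧ List.Chain' G.Adj (c ++ [z]) ∧ ∀ v ∈ c, v ∈ p.support := by
  intro y t p
  induction p with
  | nil =>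
    intro _ _ hy ht
    exact absurd ht hy
  | @cons a b tt h p ih =>
    intro hnd hxs hy ht
    rw [SimpleGraph.Walk.support_cons] at hnd hxs
    have hxs' : x ∉ p.support := fun hh => hxs (by simp [hh])
    have hxa : x ≠ a := fun hh => hxs (by simp [hh])
    have hanb : a ∉ p.support := (nodup_cons.mp hnd).1
    have hnd' : p.support.Nodup := (nodup_cons.mp hnd).2
    by_cases hbL : b ∈ L
    · refine ⟨[a], b, by simp, by simp, by simpa using hy, hbL, ?_, rfl, isChain_pair.mpr h, by simp⟩
      intro hbx
      exact hxs' (hbx ▸ SimpleGraph.Walk.start_mem_support p)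
    · obtain ⟨c, z, hc, hcn, hdisj, hz, hzx, hhead, hchain, hsub⟩ := ih hnd' hxs' hbL ht
      refine ⟨a :: c, z, by simp, ?_, ?_, hz, hzx, rfl, ?_, ?_⟩
      · exact nodup_cons.mpr ⟨fun hh => hanb (hsub a hh), hcn⟩
      · intro v hv
        rcases mem_cons.mp hv with rfl | hv'
        · exact hy
        · exact hdisj v hv'
      · obtain ⟨c0, c', rfl⟩ := exists_cons_of_ne_nil hc
        have hc0 : c0 = b := by simpa using hhead
        exact isChain_cons_cons.mpr ⟨hc0 ▸ h, hchain⟩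
      · intro v hv
        rcases mem_cons.mp hv with rfl | hv'
        · simp
        · simp [hsub v hv']

lemma exists_mem_ne {α : Type*} : ∀ {l : List α}, l.Nodup → 2 ≤ l.length → ∀ x : α,
    ∃ t ∈ l, t ≠ x := by
  intro l hnd hlen x
  match l, hnd, hlen with
  | a :: b :: rest, hnd, _ =>
    by_cases hax : a = x
    · subst hax
      refine ⟨b, by simp, ?_⟩
      intro hh
      subst hh
      simp at hnd
    · exact ⟨a, by simp, hax⟩

lemma good_step [Fintype V] [DecidableEq V] (h2 : TwoConnected G) {L : List V}
    (hL : Good G L) (hlen : L.length < Fintype.card V) :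
    ∃ M : List V, Good G M ∧ L.length < M.length := by
  obtain ⟨hcard3, hconn, hind⟩ := h2
  -- find a vertex not in L
  have hex : ∃ y : V, y ∉ L := by
    by_contra hno
    push_neg at hno
    have h1 : (Finset.univ : Finset V) ⊆ L.toFinset := fun y _ => by
      simpa using hno y
    have := (Finset.card_le_card h1).trans (L.toFinset_card_le)
    simp only [Finset.card_univ] at this
    omega
  obtain ⟨y0, hy0⟩ := hex
  have hLne : L ≠ [] := by
    intro h; rw [h] at hL; simpa using hL.2.1
  obtain ⟨a0, ha0⟩ := exists_mem_of_ne_nil L hLne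
  obtain ⟨w0⟩ := hconn.preconnected y0 a0
  obtain ⟨x, hxL, y, hyL, hadjyx⟩ := crossing w0 hy0 ha0
  -- t in L different from x
  obtain ⟨t, htL, htx⟩ := exists_mem_ne hL.1 hL.2.1 x
  have hyx : y ≠ x := fun h => hyL (h ▸ hxL)
  obtain ⟨w1, hw1⟩ := walk_avoiding (hind x) hyx htx
  set P := w1.toPath with hP
  have hPnd : (P : G.Walk y t).support.Nodup := P.2.support_nodup
  have hPx : x ∉ (P : G.Walk y t).support := fun hh =>
    hw1 (SimpleGraph.Walk.support_toPath_subset w1 hh)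
  obtain ⟨c, z, hc, hcn, hdisj, hzL, hzx, hhead, hchain, -⟩ :=
    ear_extract (L := L) (P : G.Walk y t) hPnd hPx hyL htL
  -- full chain x :: c ++ [z]
  have hfull : List.Chain' G.Adj (x :: (c ++ [z])) := by
    refine isChain_cons.mpr ⟨?_, hchain⟩
    intro w hw
    rw [head?_append, hhead] at hw
    have : y = w := by simpa using hw
    subst this
    exact hadjyx.symm
  have hxz : x ≠ z := fun h => hzx h.symm
  rcases mem_split_pair hxL hzL hxz with ⟨l1, l2, hdec, hz2⟩ | ⟨l1, l2, hdec, hx2⟩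
  · refine ⟨l1 ++ x :: (c ++ l2), good_insert hL hdec hz2 hc hcn hdisj hfull, ?_⟩
    rw [hdec]
    simp only [length_append, length_cons]
    have : 0 < c.length := length_pos_iff.mpr hc
    omega
  · have hrevchain : List.Chain' G.Adj (z :: (c.reverse ++ [x])) := by
      have h1 : Chain' (flip G.Adj) (x :: (c ++ [z])) :=
        hfull.imp (fun a b hab => hab.symm)
      have h2 : Chain' G.Adj (x :: (c ++ [z])).reverse := isChain_reverse.mpr h1
      simpa using h2
    refine ⟨l1 ++ z :: (c.reverse ++ l2),
      good_insert hL hdec hx2 (by simpa using hc) (by simpa using hcn)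
        (fun v hv => hdisj v (by simpa using hv)) hrevchain, ?_⟩
    rw [hdec]
    simp only [length_append, length_cons, length_reverse]
    have : 0 < c.length := length_pos_iff.mpr hc
    omega

lemma good_grow [Fintype V] [DecidableEq V] (h2 : TwoConnected G) :
    ∀ (k : ℕ) (L : List V), Good G L → Fintype.card V - L.length ≤ k →
    ∃ M : List V, Good G M ∧ M.length = Fintype.card V := by
  intro k
  induction k with
  | zero =>
    intro L hL hk
    refine ⟨L, hL, ?_⟩
    have := hL.1.length_le_card
    omega
  | succ k ih =>
    intro L hL hk
    have hle := hL.1.length_le_card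
    rcases eq_or_lt_of_le hle with heq | hlt
    · exact ⟨L, hL, heq⟩
    · obtain ⟨M, hM, hlen⟩ := good_step ⟨h2.1, h2.2.1, h2.2.2⟩ hL hlt
      exact ih M hM (by omega)

lemma good_start [Fintype V] (h2 : TwoConnected G) : ∃ L : List V, Good G L := by
  obtain ⟨a, b, hab⟩ : ∃ a b : V, G.Adj a b := by
    obtain ⟨x, y, hxy⟩ := Fintype.exists_pair_of_one_lt_card (by have := h2.1; omega : 1 < Fintype.card V)
    obtain ⟨w⟩ := h2.2.1.preconnected x y
    cases w with
    | nil => exact absurd rfl hxy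
    | cons h p => exact ⟨_, _, h⟩
  refine ⟨[a, b], ?_, by simp, ⟨a, b, rfl, rfl, hab⟩, ?_⟩
  · simp [hab.ne]
  · intro l1 v l2 heq
    rcases l1 with _ | ⟨u, _ | ⟨u', l1'⟩⟩
    · simp only [nil_append, cons.injEq] at heq
      obtain ⟨rfl, rfl⟩ := heq
      exact ⟨fun h => absurd rfl h, fun _ => ⟨b, by simp, hab⟩⟩
    · simp only [cons_append, nil_append, cons.injEq] at heq
      obtain ⟨rfl, rfl, rfl⟩ := heq
      exact ⟨fun _ => ⟨a, by simp, hab.symm⟩, fun h => absurd rfl h⟩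
    · exfalso
      have := congrArg List.length heq
      simp at this

lemma good_to_ordering [Fintype V] {n : ℕ} (hn : 3 ≤ n) (hcard : Fintype.card V = n)
    {L : List V} (hL : Good G L) (hlen : L.length = n) :
    ∃ v : Fin n ≃ V, IsStOrdering G v := by
  obtain ⟨hnd, hlen2, ⟨s, t, hs, ht, hadj⟩, hmid⟩ := hL
  have hLne : L ≠ [] := by intro h; rw [h] at hlen; simp at hlen; omega
  set f : Fin n → V := fun i => L.get (Fin.cast hlen.symm i) with hf
  have hinj : Function.Injective f := by
    intro i j hij
    have := (List.nodup_iff_injective_get.mp hnd) hij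
    exact Fin.cast_injective _ (by exact this)
  have hbij : Function.Bijective f :=
    (Fintype.bijective_iff_injective_and_card f).mpr ⟨hinj, by simp [hcard]⟩
  refine ⟨Equiv.ofBijective f hbij, ?_, ?_⟩
  · refine ⟨⟨0, by omega⟩, ⟨n - 1, by omega⟩, rfl, rfl, ?_⟩
    have hs' : s = L[0] := by
      rw [head?_eq_getElem?] at hs
      rw [getElem?_eq_getElem (by omega)] at hs
      simpa using hs.symm
    have ht' : t = L[L.length - 1] := by
      rw [getLast?_eq_getElem?] at ht
      rw [getElem?_eq_getElem (by omega)] at ht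
      simpa using ht.symm
    have e1 : (Equiv.ofBijective f hbij) ⟨0, by omega⟩ = L[0] := by
      simp [hf, Fin.cast]
    have e2 : (Equiv.ofBijective f hbij) ⟨n - 1, by omega⟩ = L[L.length - 1] := by
      simp [hf, Fin.cast, hlen]
    rw [e1, e2, ← hs', ← ht']
    exact hadj
  · intro i h0 hn1
    have hiL : (i : ℕ) < L.length := by omega
    have hdecomp : L = L.take i ++ L.get ⟨i, hiL⟩ :: L.drop (i + 1) := by
      conv_lhs => rw [← take_append_drop (i : ℕ) L]
      rw [drop_eq_getElem_cons hiL]; rfl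
    have := hmid (L.take i) (L.get ⟨i, hiL⟩) (L.drop (i + 1)) hdecomp
    have htake_ne : L.take i ≠ [] := by
      refine ne_nil_of_length_pos ?_
      rw [length_take]
      omega
    have hdrop_ne : L.drop (i + 1) ≠ [] := by
      refine ne_nil_of_length_pos ?_
      rw [length_drop]
      omega
    have hvi : (Equiv.ofBijective f hbij) i = L.get ⟨i, hiL⟩ := rfl
    constructor
    · obtain ⟨b, hb, hadjb⟩ := this.1 htake_ne
      rw [mem_take_iff_getElem] at hb
      obtain ⟨j, hj, hjb⟩ := hb
      refine ⟨⟨j, by omega⟩, by simp [Fin.lt_def]; omega, ?_⟩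
      have : (Equiv.ofBijective f hbij) ⟨j, by omega⟩ = b := by
        rw [← hjb]; rfl
      rw [hvi, this]
      exact hadjb
    · obtain ⟨b, hb, hadjb⟩ := this.2 hdrop_ne
      rw [mem_iff_getElem] at hb
      obtain ⟨j, hj, hjb⟩ := hb
      rw [getElem_drop] at hjb
      have hjlt : (i : ℕ) + 1 + j < n := by
        have := hj
        simp only [length_drop] at this
        omega
      refine ⟨⟨(i : ℕ) + 1 + j, by omega⟩, by simp [Fin.lt_def]; omega, ?_⟩
      have : (Equiv.ofBijective f hbij) ⟨(i : ℕ) + 1 + j, by omega⟩ = b := by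
        rw [← hjb]; rfl
      rw [hvi, this]
      exact hadjb

lemma st_to_twoconn [Fintype V] {n : ℕ} (hn : 3 ≤ n) (hcard : Fintype.card V = n)
    (v : Fin n ≃ V) (h : IsStOrdering G v) : TwoConnected G := by
  have hnpos : 0 < n := by omega
  set i0 : Fin n := ⟨0, hnpos⟩ with hi0
  set iN : Fin n := ⟨n - 1, by omega⟩ with hiN
  obtain ⟨⟨i', j', hi', hj', hadj0N'⟩, hmid⟩ := h
  have hieq : i' = i0 := Fin.ext hi'
  have hjeq : j' = iN := Fin.ext hj'
  have hadj0N : G.Adj (v i0) (v iN) := by rwa [hieq, hjeq] at hadj0N'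
  -- reachability to v i0 in G
  have reach : ∀ m : ℕ, ∀ i : Fin n, i.val = m → G.Reachable (v i) (v i0) := by
    intro m
    induction m using Nat.strong_induction_on with
    | _ m ih =>
      intro i him
      rcases Nat.eq_zero_or_pos m with rfl | hm0
      · have : i = i0 := Fin.ext him
        rw [this]
      · rcases eq_or_lt_of_le (Nat.le_sub_one_of_lt (him ▸ i.isLt) : m ≤ n - 1) with hmN | hmN
        · have : i = iN := Fin.ext (by omega)
          rw [this]
          exact hadj0N.symm.reachable
        · obtain ⟨⟨j, hj, hadj⟩, -⟩ := hmid i (by omega) (by omega)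
          exact (hadj.reachable).trans (ih j.val (him ▸ Fin.lt_def.mp hj) j rfl)
  refine ⟨hcard ▸ hn, ?_, ?_⟩
  · -- connected
    have hne : Nonempty V := by
      rw [← Fintype.card_pos_iff]; omega
    rw [SimpleGraph.connected_iff]
    refine ⟨fun a b => ?_, hne⟩
    have ha := reach (v.symm a).val (v.symm a) rfl
    have hb := reach (v.symm b).val (v.symm b) rfl
    rw [v.apply_symm_apply] at ha hb
    exact ha.trans hb.symm
  · -- removing any vertex
    intro x
    set H := G.induce {y | y ≠ x} with hH
    set k : Fin n := v.symm x with hk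
    have hvk : v k = x := v.apply_symm_apply x
    have hvne : ∀ i : Fin n, i ≠ k → v i ≠ x := by
      intro i hik he
      exact hik (v.injective (by rw [he, hvk]))
    have hlift : ∀ {i j : Fin n} (hi : i ≠ k) (hj : j ≠ k), G.Adj (v i) (v j) →
        H.Adj ⟨v i, hvne i hi⟩ ⟨v j, hvne j hj⟩ := fun _ _ hadj => hadj
    have hkN : k.val ≤ n - 1 := by omega
    -- claim A : below k, reach v i0
    have claimA : ∀ (hk0 : 0 < k.val), ∀ m : ℕ, ∀ i : Fin n, i.val = m → (hik : i.val < k.val) →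
        H.Reachable ⟨v i, hvne i (Fin.ne_of_val_ne (Nat.ne_of_lt hik))⟩
          ⟨v i0, hvne i0 (Fin.ne_of_val_ne (Nat.ne_of_lt hk0))⟩ := by
      intro hk0 m
      induction m using Nat.strong_induction_on with
      | _ m ih =>
        intro i him hik
        rcases Nat.eq_zero_or_pos m with rfl | hm0
        · have : i = i0 := Fin.ext him
          subst this
          exact SimpleGraph.Reachable.refl _
        · have hi1 : i.val < n - 1 := by omega
          obtain ⟨⟨j, hj, hadj⟩, -⟩ := hmid i (by omega) hi1
          have hjval : j.val < i.val := Fin.lt_def.mp hj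
          have hjk : j.val < k.val := by omega
          exact ((hlift (Fin.ne_of_val_ne (Nat.ne_of_lt hik))
            (Fin.ne_of_val_ne (Nat.ne_of_lt hjk)) hadj).reachable).trans
            (ih j.val (by omega) j rfl hjk)
    -- claim B : above k, reach v iN
    have claimB : ∀ (hkN' : k.val < n - 1), ∀ m : ℕ, ∀ i : Fin n, n - 1 - i.val = m →
        (hik : k.val < i.val) →
        H.Reachable ⟨v i, hvne i (Fin.ne_of_val_ne (Nat.ne_of_gt hik))⟩
          ⟨v iN, hvne iN (Fin.ne_of_val_ne (Nat.ne_of_gt hkN'))⟩ := by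
      intro hkN' m
      induction m using Nat.strong_induction_on with
      | _ m ih =>
        intro i him hik
        rcases Nat.eq_zero_or_pos m with hm0 | hm0
        · have : i = iN := Fin.ext (by omega)
          subst this
          exact SimpleGraph.Reachable.refl _
        · have hi1 : i.val < n - 1 := by omega
          have hi0' : 0 < i.val := by omega
          obtain ⟨-, ⟨j, hj, hadj⟩⟩ := hmid i hi0' hi1
          have hjval : i.val < j.val := Fin.lt_def.mp hj
          have hjk : k.val < j.val := by omega
          exact ((hlift (Fin.ne_of_val_ne (Nat.ne_of_gt hik))
            (Fin.ne_of_val_ne (Nat.ne_of_gt hjk)) hadj).reachable).trans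
            (ih (n - 1 - j.val) (by omega) j rfl hjk)
    -- a hub vertex
    have hub : ∃ c : {y | y ≠ x}, ∀ a : {y | y ≠ x}, H.Reachable a c := by
      have key : ∀ a : {y | y ≠ x}, (v.symm a.val) ≠ k := by
        intro a he
        have h2 := congrArg v he
        rw [v.apply_symm_apply, hvk] at h2
        exact a.2 h2
      have aeq : ∀ a : {y | y ≠ x}, (⟨v (v.symm a.val), hvne _ (key a)⟩ : {y | y ≠ x}) = a := by
        intro a
        exact Subtype.ext (v.apply_symm_apply a.val)
      by_cases hk0 : k.val = 0
      · refine ⟨⟨v iN, hvne iN (Fin.ne_of_val_ne (by omega))⟩, fun a => ?_⟩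
        have hik : k.val < (v.symm a.val).val := by
          have := key a
          have h1 : (v.symm a.val).val ≠ k.val := fun hh => this (Fin.ext hh)
          omega
        have := claimB (by omega) (n - 1 - (v.symm a.val).val) (v.symm a.val) rfl hik
        rwa [aeq a] at this
      · by_cases hkN' : k.val = n - 1
        · refine ⟨⟨v i0, hvne i0 (Fin.ne_of_val_ne (by omega))⟩, fun a => ?_⟩
          have hik : (v.symm a.val).val < k.val := by
            have h1 : (v.symm a.val).val ≠ k.val := fun hh => key a (Fin.ext hh)
            omega
          have := claimA (by omega) (v.symm a.val).val (v.symm a.val) rfl hik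
          rwa [aeq a] at this
        · refine ⟨⟨v i0, hvne i0 (Fin.ne_of_val_ne (by omega))⟩, fun a => ?_⟩
          have h1 : (v.symm a.val).val ≠ k.val := fun hh => key a (Fin.ext hh)
          rcases lt_or_gt_of_ne h1 with hik | hik
          · have := claimA (by omega) (v.symm a.val).val (v.symm a.val) rfl hik
            rwa [aeq a] at this
          · have hstep := claimB (by omega) (n - 1 - (v.symm a.val).val) (v.symm a.val) rfl hik
            rw [aeq a] at hstep
            refine hstep.trans ?_
            exact ((hlift (i := iN) (j := i0) (Fin.ne_of_val_ne (by omega))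
              (Fin.ne_of_val_ne (by omega)) hadj0N.symm).reachable)
    obtain ⟨c, hc⟩ := hub
    rw [SimpleGraph.connected_iff]
    exact ⟨fun a b => (hc a).trans (hc b).symm, ⟨c⟩⟩

end Aux

/-- A finite graph on `n ≥ 3` vertices has an st-ordering iff it is 2-connected. -/
theorem st_ordering_iff_two_connected {V : Type*} [Fintype V] [DecidableEq V]
    (G : SimpleGraph V) (n : ℕ) (hn : 3 ≤ n) (hcard : Fintype.card V = n) :
    (∃ v : Fin n ≃ V, IsStOrdering G v) ↔ TwoConnected G := by
  constructor
  · rintro ⟨v, hv⟩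
    exact st_to_twoconn hn hcard v hv
  · intro h2
    obtain ⟨L0, hL0⟩ := good_start h2
    obtain ⟨M, hM, hlen⟩ := good_grow h2 (Fintype.card V) L0 hL0 (by omega)
    exact good_to_ordering hn hcard hM (by rw [hlen, hcard])
end

section
/- The set of linear orders of {1,2,3,4} in which 2 and 3 appear consecutively among the elements {1,2,3} (i.e., no element of {1,2,3} lies strictly between 2 and 3) is not equal to the set of leaf-orders of any PQ-tree on leaves {1,2,3,4}; equivalently, this set of permutations is not closed under the operations generating PQ-tree orders. Concretely: there is no family 𝒞 of subsets of {1,2,3,4} such that a permutation π of {1,2,3,4} satisfies 'no element of {1,2,3} lies strictly between 2 and 3 in π' if and only if every set in 𝒞 is consecutive in π. -/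
/-- `S` is consecutive in the linear order on `Fin 4` in which element `x`
occupies position `f x`: no element outside `S` lies strictly between two
elements of `S`. -/
def ConsecIn (f : Fin 4 ≃ Fin 4) (S : Set (Fin 4)) : Prop :=
  ∀ x y z : Fin 4, x ∈ S → z ∈ S → f x < f y → f y < f z → y ∈ S

/-- No element of `{0,1,2}` lies strictly between `1` and `2` in the linear
order given by positions `f` (here `0,1,2,3` stand for the elements `1,2,3,4`
of the paper, so this says: `2` and `3` are consecutive among `{1,2,3}`). -/
def BetweenFree (f : Fin 4 ≃ Fin 4) : Prop :=
  ∀ y : Fin 4, y ∈ ({0, 1, 2} : Set (Fin 4)) →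
    ¬(f 1 < f y ∧ f y < f 2) ∧ ¬(f 2 < f y ∧ f y < f 1)

/- auxiliary material -/

def pf0 : Fin 4 ≃ Fin 4 := ⟨![1,0,2,3], ![1,0,2,3], by decide, by decide⟩
def pg1 : Fin 4 ≃ Fin 4 := ⟨![3,0,2,1], ![1,3,2,0], by decide, by decide⟩
def pg2 : Fin 4 ≃ Fin 4 := ⟨![2,1,0,3], ![2,1,0,3], by decide, by decide⟩
def pg3 : Fin 4 ≃ Fin 4 := ⟨![3,0,1,2], ![1,2,3,0], by decide, by decide⟩
def pg4 : Fin 4 ≃ Fin 4 := ⟨![0,1,3,2], ![0,1,3,2], by decide, by decide⟩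

/-- Boolean version of `ConsecIn`. -/
def CB (f : Fin 4 ≃ Fin 4) (b : Fin 4 → Bool) : Prop :=
  ∀ x y z : Fin 4, b x = true → b z = true → f x < f y → f y < f z → b y = true

instance (f : Fin 4 ≃ Fin 4) (b : Fin 4 → Bool) : Decidable (CB f b) := by
  unfold CB; infer_instance

lemma consec_iff_CB (f : Fin 4 ≃ Fin 4) (S : Set (Fin 4)) (b : Fin 4 → Bool)
    (hb : ∀ x, x ∈ S ↔ b x = true) : ConsecIn f S ↔ CB f b := by
  constructor
  · intro h x y z hx hz h1 h2
    exact (hb y).1 (h x y z ((hb x).2 hx) ((hb z).2 hz) h1 h2)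
  · intro h x y z hx hz h1 h2
    exact (hb y).2 (h x y z ((hb x).1 hx) ((hb z).1 hz) h1 h2)

lemma key : ∀ b : Fin 4 → Bool,
    CB pg1 b → CB pg2 b → CB pg3 b → CB pg4 b → CB pf0 b := by decide

lemma bf_g1 : BetweenFree pg1 := by
  intro y hy
  simp only [Set.mem_insert_iff, Set.mem_singleton_iff] at hy
  rcases hy with rfl | rfl | rfl <;> exact ⟨by decide, by decide⟩

lemma bf_g2 : BetweenFree pg2 := by
  intro y hy
  simp only [Set.mem_insert_iff, Set.mem_singleton_iff] at hy
  rcases hy with rfl | rfl | rfl <;> exact ⟨by decide, by decide⟩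

lemma bf_g3 : BetweenFree pg3 := by
  intro y hy
  simp only [Set.mem_insert_iff, Set.mem_singleton_iff] at hy
  rcases hy with rfl | rfl | rfl <;> exact ⟨by decide, by decide⟩

lemma bf_g4 : BetweenFree pg4 := by
  intro y hy
  simp only [Set.mem_insert_iff, Set.mem_singleton_iff] at hy
  rcases hy with rfl | rfl | rfl <;> exact ⟨by decide, by decide⟩

lemma not_bf_f0 : ¬ BetweenFree pf0 := by
  intro h
  have h0 : (0 : Fin 4) ∈ ({0, 1, 2} : Set (Fin 4)) := Set.mem_insert _ _
  exact (h 0 h0).1 ⟨by decide, by decide⟩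

/-- The set of linear orders of a 4-element set in which `2` and `3` are
consecutive among `{1,2,3}` is not expressible by a family of consecutivity
constraints (hence not representable by a PQ-tree). -/
theorem not_PQ_representable :
    ¬ ∃ 𝒞 : Set (Set (Fin 4)),
        ∀ f : Fin 4 ≃ Fin 4, BetweenFree f ↔ ∀ S ∈ 𝒞, ConsecIn f S := by
  classical
  rintro ⟨𝒞, h⟩
  have hnot : ¬ ∀ S ∈ 𝒞, ConsecIn pf0 S := fun hall => not_bf_f0 ((h pf0).mpr hall)
  push_neg at hnot
  obtain ⟨S, hS, hbad⟩ := hnot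
  set b : Fin 4 → Bool := fun x => decide (x ∈ S) with hbdef
  have hb : ∀ x, x ∈ S ↔ b x = true := by
    intro x; simp [hbdef]
  have c1 : CB pg1 b := (consec_iff_CB _ _ _ hb).1 ((h pg1).mp bf_g1 S hS)
  have c2 : CB pg2 b := (consec_iff_CB _ _ _ hb).1 ((h pg2).mp bf_g2 S hS)
  have c3 : CB pg3 b := (consec_iff_CB _ _ _ hb).1 ((h pg3).mp bf_g3 S hS)
  have c4 : CB pg4 b := (consec_iff_CB _ _ _ hb).1 ((h pg4).mp bf_g4 S hS)
  exact hbad ((consec_iff_CB _ _ _ hb).2 (key b c1 c2 c3 c4))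
end

section
/- Let P be a simple polygon, let p, q be points in the closed region R bounded by P, and let L be a straight line segment contained in R. Then the geodesic shortest path from p to q inside P intersects L in at most one connected component (in particular, if it crosses L, it crosses at most once). -/
/-- The Euclidean plane. -/
abbrev Pt := EuclideanSpace ℝ (Fin 2)

/-- A simple polygon, given by its cyclic sequence of vertices; consecutive
vertices are joined by straight edges, and two distinct edges meet only in
shared endpoints. -/
structure SimplePolygon where
  n : ℕ
  three_le : 3 ≤ n
  vtx : ZMod n → Pt
  inj : Function.Injective vtx
  edges_meet : ∀ i j : ZMod n, i ≠ j →
    segment ℝ (vtx i) (vtx (i + 1)) ∩ segment ℝ (vtx j) (vtx (j + 1)) ⊆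
      ({vtx i, vtx (i + 1)} : Set Pt) ∩ ({vtx j, vtx (j + 1)} : Set Pt)

namespace SimplePolygon

/-- The boundary of the polygon: the union of its edges. -/
def boundary (P : SimplePolygon) : Set Pt :=
  ⋃ i : ZMod P.n, segment ℝ (P.vtx i) (P.vtx (i + 1))

/-- The closed region bounded by the polygon: the boundary together with the
bounded connected components of its complement. -/
def region (P : SimplePolygon) : Set Pt :=
  P.boundary ∪
    {x : Pt | x ∉ P.boundary ∧ Bornology.IsBounded (connectedComponentIn P.boundaryᶜ x)}

/-- `x` is a reflex vertex of `P`: it is a vertex at which the region is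
locally non-convex (interior angle exceeding `π`). -/
def IsReflexVertex (P : SimplePolygon) (x : Pt) : Prop :=
  (∃ i : ZMod P.n, x = P.vtx i) ∧ ∀ ε > (0 : ℝ), ¬ Convex ℝ (Metric.ball x ε ∩ P.region)

end SimplePolygon

/-- The length of the polygonal path through the points `f 0, …, f k`. -/
noncomputable def polyLength {k : ℕ} (f : Fin (k + 1) → Pt) : ℝ :=
  ∑ i : Fin k, dist (f i.castSucc) (f i.succ)

/-- The point set (track) of the polygonal path through `f 0, …, f k`. -/
def polyTrack {k : ℕ} (f : Fin (k + 1) → Pt) : Set Pt :=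
  ⋃ i : Fin k, segment ℝ (f i.castSucc) (f i.succ)

/-- `f` is a geodesic (shortest polygonal path) from `p` to `q` inside the
region of the polygon `P`. -/
def IsGeodesic (P : SimplePolygon) (p q : Pt) {k : ℕ} (f : Fin (k + 1) → Pt) : Prop :=
  f 0 = p ∧ f (Fin.last k) = q ∧ polyTrack f ⊆ P.region ∧
    ∀ (k' : ℕ) (g : Fin (k' + 1) → Pt), g 0 = p → g (Fin.last k') = q →
      polyTrack g ⊆ P.region → polyLength f ≤ polyLength g

lemma seg_union {x y c : Pt} (hc : c ∈ segment ℝ x y) :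
    segment ℝ x y ⊆ segment ℝ x c ∪ segment ℝ c y := by
  rw [segment_eq_image'] at hc
  obtain ⟨s, ⟨hs0, hs1⟩, hcs⟩ := hc
  intro w hw
  rw [segment_eq_image'] at hw
  obtain ⟨t, ⟨ht0, ht1⟩, hwt⟩ := hw
  rcases le_total t s with h | h
  · left
    rcases eq_or_lt_of_le hs0 with hs | hs
    · have ht : t = 0 := le_antisymm (h.trans hs.symm.le) ht0
      have : w = x := by rw [← hwt, ht]; simp
      rw [this]; exact left_mem_segment ℝ x c
    · rw [segment_eq_image']
      refine ⟨t / s, ⟨div_nonneg ht0 hs.le, (div_le_one hs).2 h⟩, ?_⟩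
      rw [← hcs, ← hwt]
      have : s ≠ 0 := hs.ne'
      match_scalars <;> field_simp <;> ring
  · right
    rcases eq_or_lt_of_le hs1 with hs | hs
    · have ht : t = 1 := le_antisymm ht1 (hs ▸ h)
      subst hwt; rw [ht, ← hcs, hs]
      simp [right_mem_segment]
    · rw [segment_eq_image']
      refine ⟨(t - s) / (1 - s), ⟨div_nonneg (by linarith) (by linarith),
        (div_le_one (by linarith)).2 (by linarith)⟩, ?_⟩
      rw [← hcs, ← hwt]
      have : (1:ℝ) - s ≠ 0 := by linarith
      match_scalars <;> field_simp <;> ring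

lemma chain_cover : ∀ (n : ℕ) (z : ℕ → Pt), 1 ≤ n →
    (∑ m ∈ Finset.range n, dist (z m) (z (m+1))) ≤ dist (z 0) (z n) →
    segment ℝ (z 0) (z n) ⊆ ⋃ m ∈ Finset.range n, segment ℝ (z m) (z (m+1)) := by
  intro n
  induction n with
  | zero => omega
  | succ n ih =>
    intro z _ hsum
    rcases Nat.eq_zero_or_pos n with hn | hn
    · subst hn
      intro w hw
      exact Set.mem_biUnion (Finset.self_mem_range_succ 0) hw
    · have hsum' : dist (z 0) (z 1) + ∑ m ∈ Finset.range n, dist (z (m+1)) (z (m+1+1))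
          ≤ dist (z 0) (z (n+1)) := by
        rw [Finset.sum_range_succ'] at hsum
        linarith [hsum]
      have htail : ∑ m ∈ Finset.range n, dist (z (m+1)) (z (m+1+1)) ≤ dist (z 1) (z (n+1)) := by
        have := dist_le_range_sum_dist (fun m => z (m+1)) n
        have htri := dist_triangle (z 0) (z 1) (z (n+1))
        linarith
      have heq : dist (z 0) (z 1) + dist (z 1) (z (n+1)) = dist (z 0) (z (n+1)) := by
        have := dist_le_range_sum_dist (fun m => z (m+1)) n
        have htri := dist_triangle (z 0) (z 1) (z (n+1))
        linarith
      have hbtw : Wbtw ℝ (z 0) (z 1) (z (n+1)) := dist_add_dist_eq_iff.1 heq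
      have hmem : z 1 ∈ segment ℝ (z 0) (z (n+1)) := hbtw.mem_segment
      have hsub := ih (fun m => z (m+1)) hn (by simpa using htail)
      intro w hw
      rcases seg_union hmem hw with hw1 | hw2
      · exact Set.mem_biUnion (Finset.mem_range.2 (by omega)) hw1
      · rcases Set.mem_iUnion₂.1 (hsub hw2) with ⟨m, hm, hwm⟩
        exact Set.mem_biUnion (Finset.mem_range.2 (by have := Finset.mem_range.1 hm; omega)) hwm

lemma key_lt (P : SimplePolygon) (p q : Pt) {k : ℕ} (f : Fin (k + 1) → Pt)
    (hf : IsGeodesic P p q f) {x y : Pt} (i j : Fin k) (hij : (i : ℕ) < (j : ℕ))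
    (hx : x ∈ segment ℝ (f i.castSucc) (f i.succ))
    (hy : y ∈ segment ℝ (f j.castSucc) (f j.succ))
    (hseg : segment ℝ x y ⊆ P.region) : segment ℝ x y ⊆ polyTrack f := by
  obtain ⟨hf0, hfl, hftrack, hfmin⟩ := hf
  set a : ℕ := (i : ℕ) with ha
  set b : ℕ := (j : ℕ) with hb
  have hak : a < k := i.isLt
  have hbk : b < k := j.isLt
  -- ℕ-indexed version of f
  set F : ℕ → Pt := fun m => f ⟨min m k, by omega⟩ with hF
  have hFf : ∀ (m : ℕ) (hm : m ≤ k), F m = f ⟨m, by omega⟩ := by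
    intro m hm; exact congrArg f (Fin.ext (Nat.min_eq_left hm))
  have hedge : ∀ m : ℕ, m < k → segment ℝ (F m) (F (m+1)) ⊆ polyTrack f := by
    intro m hm
    have h1 : F m = f (Fin.castSucc ⟨m, hm⟩) := by rw [hFf m (by omega)]; rfl
    have h2 : F (m+1) = f (Fin.succ ⟨m, hm⟩) := by
      rw [hFf (m+1) (by omega)]; congr 1
    rw [h1, h2]
    exact Set.subset_iUnion (fun i : Fin k => segment ℝ (f i.castSucc) (f i.succ)) ⟨m, hm⟩
  have hx' : x ∈ segment ℝ (F a) (F (a+1)) := by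
    rw [hFf a (by omega), hFf (a+1) (by omega)]
    convert hx using 3 <;> exact (Fin.ext rfl)
  have hy' : y ∈ segment ℝ (F b) (F (b+1)) := by
    rw [hFf b (by omega), hFf (b+1) (by omega)]
    convert hy using 3 <;> exact (Fin.ext rfl)
  -- the shortcut path
  set G : ℕ → Pt := fun m =>
    if m ≤ a then F m else if m = a + 1 then x else if m ≤ b + 1 then y else F (m-1) with hG
  set g : Fin (k+2) → Pt := fun m => G m.val with hg
  have hg0 : g 0 = p := by
    have : G 0 = F 0 := by simp [hG]
    rw [← hf0]; show G 0 = f 0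
    rw [this, hFf 0 (by omega)]; rfl
  have hglast : g (Fin.last (k+1)) = q := by
    show G (k+1) = q
    have : G (k+1) = F k := by
      simp only [hG]
      rw [if_neg (by omega), if_neg (by omega), if_neg (by omega)]
      norm_num
    rw [this, ← hfl, hFf k le_rfl]; rfl
  -- values of G on ranges
  have hGF : ∀ m, m ≤ a → G m = F m := fun m hm => by simp [hG, hm]
  have hGx : G (a+1) = x := by
    simp only [hG]; rw [if_neg (by omega : ¬ (a+1 ≤ a))]; simp
  have hGy : ∀ m, a + 2 ≤ m → m ≤ b + 1 → G m = y := by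
    intro m h1 h2; simp only [hG]; rw [if_neg (by omega), if_neg (by omega), if_pos h2]
  have hGF' : ∀ m, b + 2 ≤ m → G m = F (m-1) := by
    intro m h1; simp only [hG]; rw [if_neg (by omega), if_neg (by omega), if_neg (by omega)]
  -- track of g is in the region
  have hgtrack : polyTrack g ⊆ P.region := by
    intro w hw
    obtain ⟨m, hwm⟩ := Set.mem_iUnion.1 hw
    have hwm : w ∈ segment ℝ (G m.val) (G (m.val + 1)) := hwm
    set μ := (m : ℕ) with hμ
    have hμk : μ < k + 1 := m.isLt
    rcases lt_or_ge μ a with hc | hc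
    · rw [hGF μ (by omega), hGF (μ+1) (by omega)] at hwm
      exact hftrack (hedge μ (by omega) hwm)
    rcases eq_or_lt_of_le hc with hc | hc
    · rw [hGF μ (by omega)] at hwm
      rw [← hc] at hwm
      rw [hGx] at hwm
      exact hftrack (hedge a (by omega)
        ((convex_segment _ _).segment_subset (left_mem_segment _ _ _) hx' hwm))
    rcases eq_or_lt_of_le (by omega : a + 1 ≤ μ) with hc | hc
    · rw [← hc] at hwm
      rw [hGx, hGy (a+2) (by omega) (by omega)] at hwm
      exact hseg hwm
    rcases lt_or_ge μ (b+1) with hd | hd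
    · rw [hGy μ (by omega) (by omega), hGy (μ+1) (by omega) (by omega)] at hwm
      rw [segment_same] at hwm
      rw [hwm]
      exact hftrack (hedge b (by omega) hy')
    rcases eq_or_lt_of_le hd with hd | hd
    · rw [← hd] at hwm
      rw [hGy (b+1) (by omega) (by omega), hGF' (b+2) (by omega)] at hwm
      have : b + 2 - 1 = b + 1 := by omega
      rw [this] at hwm
      exact hftrack (hedge b (by omega)
        ((convex_segment _ _).segment_subset hy' (right_mem_segment _ _ _) hwm))
    · rw [hGF' μ (by omega), hGF' (μ+1) (by omega)] at hwm
      have h1 : μ + 1 - 1 = (μ - 1) + 1 := by omega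
      rw [h1] at hwm
      exact hftrack (hedge (μ-1) (by omega) hwm)
  -- length comparison
  have hlen := hfmin (k+1) g hg0 hglast hgtrack
  set d : ℕ → ℝ := fun m => dist (F m) (F (m+1)) with hd
  set e : ℕ → ℝ := fun m => dist (G m) (G (m+1)) with he
  have hLf : polyLength f = ∑ m ∈ Finset.range k, d m := by
    unfold polyLength
    rw [← Fin.sum_univ_eq_sum_range d k]
    apply Finset.sum_congr rfl
    intro m _
    show dist (f m.castSucc) (f m.succ) = dist (F m.val) (F (m.val+1))
    rw [hFf m.val (by omega), hFf (m.val+1) (by omega)]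
    rfl
  have hLg : polyLength g = ∑ m ∈ Finset.range (k+1), e m := by
    unfold polyLength
    rw [← Fin.sum_univ_eq_sum_range e (k+1)]
    apply Finset.sum_congr rfl
    intro m _
    rfl
  -- splitting the sums
  have split_f : ∑ m ∈ Finset.range k, d m =
      (∑ m ∈ Finset.Ico 0 a, d m) + d a + (∑ m ∈ Finset.Ico (a+1) b, d m) + d b +
        (∑ m ∈ Finset.Ico (b+1) k, d m) := by
    rw [Finset.range_eq_Ico]
    rw [← Finset.sum_Ico_consecutive d (Nat.zero_le a) (by omega : a ≤ k),
        ← Finset.sum_Ico_consecutive d (by omega : a ≤ a+1) (by omega : a+1 ≤ k),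
        ← Finset.sum_Ico_consecutive d (by omega : a+1 ≤ b) (by omega : b ≤ k),
        ← Finset.sum_Ico_consecutive d (by omega : b ≤ b+1) (by omega : b+1 ≤ k)]
    have h1 : ∑ m ∈ Finset.Ico a (a+1), d m = d a := by
      rw [Finset.sum_Ico_succ_top le_rfl, Finset.Ico_self, Finset.sum_empty, zero_add]
    have h2 : ∑ m ∈ Finset.Ico b (b+1), d m = d b := by
      rw [Finset.sum_Ico_succ_top le_rfl, Finset.Ico_self, Finset.sum_empty, zero_add]
    rw [h1, h2]; ring
  have split_g : ∑ m ∈ Finset.range (k+1), e m =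
      (∑ m ∈ Finset.Ico 0 a, e m) + e a + e (a+1) + (∑ m ∈ Finset.Ico (a+2) (b+1), e m)
        + e (b+1) + (∑ m ∈ Finset.Ico (b+2) (k+1), e m) := by
    rw [Finset.range_eq_Ico]
    rw [← Finset.sum_Ico_consecutive e (Nat.zero_le a) (by omega : a ≤ k+1),
        ← Finset.sum_Ico_consecutive e (by omega : a ≤ a+1) (by omega : a+1 ≤ k+1),
        ← Finset.sum_Ico_consecutive e (by omega : a+1 ≤ a+2) (by omega : a+2 ≤ k+1),
        ← Finset.sum_Ico_consecutive e (by omega : a+2 ≤ b+1) (by omega : b+1 ≤ k+1),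
        ← Finset.sum_Ico_consecutive e (by omega : b+1 ≤ b+2) (by omega : b+2 ≤ k+1)]
    have h1 : ∑ m ∈ Finset.Ico a (a+1), e m = e a := by
      rw [Finset.sum_Ico_succ_top le_rfl, Finset.Ico_self, Finset.sum_empty, zero_add]
    have h2 : ∑ m ∈ Finset.Ico (a+1) (a+2), e m = e (a+1) := by
      rw [Finset.sum_Ico_succ_top le_rfl, Finset.Ico_self, Finset.sum_empty, zero_add]
    have h3 : ∑ m ∈ Finset.Ico (b+1) (b+2), e m = e (b+1) := by
      rw [Finset.sum_Ico_succ_top le_rfl, Finset.Ico_self, Finset.sum_empty, zero_add]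
    rw [h1, h2, h3]; ring
  -- identify the pieces
  have hA : ∑ m ∈ Finset.Ico 0 a, e m = ∑ m ∈ Finset.Ico 0 a, d m := by
    apply Finset.sum_congr rfl
    intro m hm
    have hm' : m < a := (Finset.mem_Ico.1 hm).2
    show dist (G m) (G (m+1)) = dist (F m) (F (m+1))
    rw [hGF m (by omega), hGF (m+1) (by omega)]
  have hea : e a = dist (F a) x := by
    show dist (G a) (G (a+1)) = _
    rw [hGF a le_rfl, hGx]
  have hea1 : e (a+1) = dist x y := by
    show dist (G (a+1)) (G (a+2)) = _
    rw [hGx, hGy (a+2) le_rfl (by omega)]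
  have hZ : ∑ m ∈ Finset.Ico (a+2) (b+1), e m = 0 := by
    apply Finset.sum_eq_zero
    intro m hm
    obtain ⟨hm1, hm2⟩ := Finset.mem_Ico.1 hm
    show dist (G m) (G (m+1)) = 0
    rw [hGy m (by omega) (by omega), hGy (m+1) (by omega) (by omega), dist_self]
  have heb : e (b+1) = dist y (F (b+1)) := by
    show dist (G (b+1)) (G (b+2)) = _
    rw [hGy (b+1) (by omega) le_rfl, hGF' (b+2) le_rfl]
    norm_num
  have hB : ∑ m ∈ Finset.Ico (b+2) (k+1), e m = ∑ m ∈ Finset.Ico (b+1) k, d m := by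
    rw [Finset.sum_Ico_eq_sum_range, Finset.sum_Ico_eq_sum_range]
    have hrange : k + 1 - (b+2) = k - (b+1) := by omega
    rw [hrange]
    apply Finset.sum_congr rfl
    intro m hm
    have hm' : m < k - (b+1) := Finset.mem_range.1 hm
    show dist (G (b+2+m)) (G (b+2+m+1)) = dist (F (b+1+m)) (F (b+1+m+1))
    rw [hGF' (b+2+m) (by omega), hGF' (b+2+m+1) (by omega)]
    have h1 : b+2+m-1 = b+1+m := by omega
    have h2 : b+2+m+1-1 = b+1+m+1 := by omega
    rw [h1, h2]
  have hda : d a = dist (F a) x + dist x (F (a+1)) :=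
    ((mem_segment_iff_wbtw.1 hx').dist_add_dist).symm
  have hdb : d b = dist (F b) y + dist y (F (b+1)) :=
    ((mem_segment_iff_wbtw.1 hy').dist_add_dist).symm
  have hkey : dist x (F (a+1)) + (∑ m ∈ Finset.Ico (a+1) b, d m) + dist (F b) y
      ≤ dist x y := by
    rw [hLf, hLg, split_f, split_g, hA, hea, hea1, hZ, heb, hB, hda, hdb] at hlen
    linarith
  -- the chain
  set n := b - a + 1 with hn
  set z : ℕ → Pt := fun m => if m = 0 then x else if m ≤ b - a then F (a + m) else y with hz
  have hz0 : z 0 = x := by simp [hz]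
  have hzn : z n = y := by
    simp only [hz]
    rw [if_neg (by omega), if_neg (by omega)]
  have hzF : ∀ m, 1 ≤ m → m ≤ b - a → z m = F (a + m) := by
    intro m h1 h2
    simp only [hz]
    rw [if_neg (by omega), if_pos h2]
  have hchain : ∑ m ∈ Finset.range n, dist (z m) (z (m+1)) =
      dist x (F (a+1)) + (∑ m ∈ Finset.Ico (a+1) b, d m) + dist (F b) y := by
    rw [Finset.range_eq_Ico,
        ← Finset.sum_Ico_consecutive (fun m => dist (z m) (z (m+1)))
          (by omega : 0 ≤ 1) (by omega : 1 ≤ n),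
        ← Finset.sum_Ico_consecutive (fun m => dist (z m) (z (m+1)))
          (by omega : 1 ≤ b - a) (by omega : b - a ≤ n)]
    have h0 : ∑ m ∈ Finset.Ico 0 1, dist (z m) (z (m+1)) = dist x (F (a+1)) := by
      rw [show Finset.Ico 0 1 = {0} from rfl, Finset.sum_singleton, hz0,
          hzF 1 le_rfl (by omega)]
    have hlast : ∑ m ∈ Finset.Ico (b-a) n, dist (z m) (z (m+1)) = dist (F b) y := by
      rw [show Finset.Ico (b-a) n = {b-a} from by rw [hn]; exact Nat.Ico_succ_singleton _,
          Finset.sum_singleton, hzF (b-a) (by omega) le_rfl,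
          show b - a + 1 = n from rfl, hzn, show a + (b-a) = b from by omega]
    have hmid : ∑ m ∈ Finset.Ico 1 (b-a), dist (z m) (z (m+1)) =
        ∑ m ∈ Finset.Ico (a+1) b, d m := by
      rw [Finset.sum_Ico_eq_sum_range, Finset.sum_Ico_eq_sum_range]
      have hrange : b - a - 1 = b - (a+1) := by omega
      rw [hrange]
      apply Finset.sum_congr rfl
      intro m hm
      have hm' : m < b - (a+1) := Finset.mem_range.1 hm
      show dist (z (1+m)) (z (1+m+1)) = dist (F (a+1+m)) (F (a+1+m+1))
      rw [hzF (1+m) (by omega) (by omega), hzF (1+m+1) (by omega) (by omega),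
          show a+(1+m) = a+1+m from by omega, show a+(1+m+1) = a+1+m+1 from by omega]
    rw [h0, hlast, hmid]; ring
  have hcc := chain_cover n z (by omega) (by rw [hz0, hzn, hchain]; exact hkey)
  rw [hz0, hzn] at hcc
  intro w hw
  obtain ⟨m, hm, hwm⟩ := Set.mem_iUnion₂.1 (hcc hw)
  have hmn : m < n := Finset.mem_range.1 hm
  rcases Nat.eq_zero_or_pos m with h0 | h1
  · subst h0
    rw [hz0, hzF 1 le_rfl (by omega)] at hwm
    exact hedge a (by omega)
      ((convex_segment _ _).segment_subset hx' (right_mem_segment _ _ _) hwm)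
  rcases eq_or_lt_of_le (by omega : m + 1 ≤ n) with hlast | hlt
  · have hmval : m = b - a := by omega
    subst hmval
    rw [hzF (b-a) (by omega) le_rfl, show b - a + 1 = n from rfl, hzn,
        show a + (b-a) = b from by omega] at hwm
    exact hedge b (by omega)
      ((convex_segment _ _).segment_subset (left_mem_segment _ _ _) hy' hwm)
  · rw [hzF m (by omega) (by omega), hzF (m+1) (by omega) (by omega),
        show a + (m+1) = a + m + 1 from by omega] at hwm
    exact hedge (a+m) (by omega) hwm

lemma key_all (P : SimplePolygon) (p q : Pt) {k : ℕ} (f : Fin (k + 1) → Pt)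
    (hf : IsGeodesic P p q f) {x y : Pt} (hx : x ∈ polyTrack f) (hy : y ∈ polyTrack f)
    (hseg : segment ℝ x y ⊆ P.region) : segment ℝ x y ⊆ polyTrack f := by
  obtain ⟨i, hxi⟩ := Set.mem_iUnion.1 hx
  obtain ⟨j, hyj⟩ := Set.mem_iUnion.1 hy
  rcases lt_trichotomy (i : ℕ) (j : ℕ) with h | h | h
  · exact key_lt P p q f hf i j h hxi hyj hseg
  · have hij : i = j := Fin.ext h
    subst hij
    intro w hw
    have : w ∈ segment ℝ (f i.castSucc) (f i.succ) :=
      (convex_segment _ _).segment_subset hxi hyj hw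
    exact Set.mem_iUnion.2 ⟨i, this⟩
  · rw [segment_symm] at hseg ⊢
    exact key_lt P p q f hf j i h hyj hxi hseg

/-- The geodesic shortest path between two points inside a simple polygon
crosses any straight line segment contained in the region at most once: the
intersection of its track with the segment is connected. -/
theorem geodesic_meets_segment_connected (P : SimplePolygon) (p q : Pt)
    (hp : p ∈ P.region) (hq : q ∈ P.region) {k : ℕ} (f : Fin (k + 1) → Pt)
    (hf : IsGeodesic P p q f) (a b : Pt) (hL : segment ℝ a b ⊆ P.region) :
    IsPreconnected (polyTrack f ∩ segment ℝ a b) := by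
  apply Convex.isPreconnected
  rw [convex_iff_segment_subset]
  rintro x ⟨hxt, hxs⟩ y ⟨hyt, hys⟩
  have hsub : segment ℝ x y ⊆ segment ℝ a b :=
    (convex_segment a b).segment_subset hxs hys
  have hreg : segment ℝ x y ⊆ P.region := hsub.trans hL
  intro w hw
  exact ⟨key_all P p q f hf hxt hyt hreg hw, hsub hw⟩
end
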